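/- arXiv:1801.06110 — 3 statements merged into one kernel-verified Lean document; each statement's English description precedes it below -/
import Mathlib

section
/- Let p be a prime and let A and B be disjoint finite nonempty sets of prime divisors of p−1. Let y and z be units modulo p such that: y is a q-th power non-residue mod p for every q ∈ A; z is a q-th power non-residue mod p for every q ∈ B; and y is a q-th power residue mod p for every q ∈ B. Then there exists an integer m with 0 ≤ m ≤ j(P(A)) − 1, where P(A) = ∏_{q ∈ A} q, such that y^m·z is a q-th power non-residue mod p for every q ∈ A ∪ B. -/
/-!
Write `y = g ^ a`, `z = g ^ b` for a generator `g` of `(ZMod p)ˣ`. For a prime `q ∣ p - 1`,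
`g ^ t` is a `q`-th power iff `q ∣ t`, so the hypotheses read `q ∤ a` for `q ∈ A` and
`q ∣ a`, `q ∤ b` for `q ∈ B`, and we need `q ∤ a * m + b` for all `q ∈ A ∪ B`.
For `q ∈ B` every `m` works; for `q ∈ A` exactly one residue class of `m` mod `q` is excluded.
By the Chinese remainder theorem the excluded `m` are those with `m - c` not coprime to
`∏ q ∈ A, q`, for a suitable `c`, and the Jacobsthal function bounds the gap between integers
coprime to that product.
-/

/-- The Jacobsthal function: the least positive `m` such that among any `m`
consecutive integers there is one coprime to `n`. -/
noncomputable def jacobsthal (n : ℕ) : ℕ :=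
  sInf {m : ℕ | 0 < m ∧ ∀ b : ℤ, ∃ k : ℤ, b < k ∧ k ≤ b + m ∧ IsCoprime k (n : ℤ)}

lemma jacobsthal_spec {n : ℕ} (hn : 0 < n) (b : ℤ) :
    ∃ k : ℤ, b < k ∧ k ≤ b + jacobsthal n ∧ IsCoprime k (n : ℤ) := by
  have hnZ : (0 : ℤ) < n := by exact_mod_cast hn
  -- `n` itself qualifies: among `n` consecutive integers one is `≡ 1 [ZMOD n]`.
  have hmem : n ∈ {m : ℕ | 0 < m ∧ ∀ b : ℤ, ∃ k : ℤ, b < k ∧ k ≤ b + m ∧ IsCoprime k (n : ℤ)} := by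
    refine ⟨hn, fun b => ⟨b + 1 + (-b) % n, ?_, ?_, ?_⟩⟩
    · linarith [Int.emod_nonneg (-b) hnZ.ne']
    · linarith [Int.emod_lt_of_pos (-b) hnZ]
    · have hk : b + 1 + (-b) % n = 1 + (n : ℤ) * (-(-b / n)) := by rw [Int.emod_def]; ring
      rw [hk]
      exact isCoprime_one_left.add_mul_left_left _
  exact (Nat.sInf_mem ⟨n, hmem⟩).2 b

lemma exists_lt_jacobsthal_isCoprime_sub {n : ℕ} (hn : 0 < n) (c : ℤ) :
    ∃ m : ℕ, m < jacobsthal n ∧ IsCoprime ((m : ℤ) - c) (n : ℤ) := by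
  obtain ⟨k, hk_gt, hk_le, hk_coprime⟩ := jacobsthal_spec hn (-c - 1)
  have hm : ((k + c).toNat : ℤ) = k + c := Int.toNat_of_nonneg (by linarith)
  refine ⟨(k + c).toNat, by omega, ?_⟩
  rwa [hm, add_sub_cancel_right]

lemma exists_lt_jacobsthal_forall_natCast_ne (A : Finset ℕ) (hA : ∀ q ∈ A, q.Prime)
    (r : (q : ℕ) → ZMod q) :
    ∃ m : ℕ, m < jacobsthal (∏ q ∈ A, q) ∧ ∀ q ∈ A, (m : ZMod q) ≠ r q := by
  obtain ⟨c, hc⟩ := Nat.chineseRemainderOfFinset (fun q => (r q).val) id A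
    (fun q hq => (hA q hq).ne_zero)
    (fun q hq q' hq' hne => (Nat.coprime_primes (hA q hq) (hA q' hq')).mpr hne)
  obtain ⟨m, hm, hcop⟩ :=
    exists_lt_jacobsthal_isCoprime_sub (Finset.prod_pos fun q hq => (hA q hq).pos) c
  refine ⟨m, hm, fun q hq hmr => ?_⟩
  have : NeZero q := ⟨(hA q hq).ne_zero⟩
  have hcr : (c : ZMod q) = r q := by
    rw [← ZMod.natCast_zmod_val (r q)]
    exact (ZMod.natCast_eq_natCast_iff _ _ _).mpr (hc q hq)
  have hq_dvd_sub : (q : ℤ) ∣ (m : ℤ) - c := by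
    rw [← ZMod.intCast_zmod_eq_zero_iff_dvd]
    push_cast
    rw [hmr, hcr, sub_self]
  have hq_dvd_prod : (q : ℤ) ∣ ((∏ q ∈ A, q : ℕ) : ℤ) :=
    Int.natCast_dvd_natCast.mpr (Finset.dvd_prod_of_mem _ hq)
  exact (Nat.prime_iff_prime_int.mp (hA q hq)).not_isUnit
    (hcop.isUnit_of_dvd' hq_dvd_sub hq_dvd_prod)

lemma exists_lt_jacobsthal_forall_not_dvd_mul_add (A B : Finset ℕ) (hA : ∀ q ∈ A, q.Prime)
    (a b : ℕ) (haA : ∀ q ∈ A, ¬ q ∣ a) (haB : ∀ q ∈ B, q ∣ a) (hbB : ∀ q ∈ B, ¬ q ∣ b) :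
    ∃ m : ℕ, m < jacobsthal (∏ q ∈ A, q) ∧ ∀ q ∈ A ∪ B, ¬ q ∣ a * m + b := by
  obtain ⟨m, hm, hmr⟩ :=
    exists_lt_jacobsthal_forall_natCast_ne A hA fun q => -(b : ZMod q) * (a : ZMod q)⁻¹
  refine ⟨m, hm, fun q hq hdvd => ?_⟩
  rcases Finset.mem_union.mp hq with hqA | hqB
  · have : Fact q.Prime := ⟨hA q hqA⟩
    have ha : (a : ZMod q) ≠ 0 := by rw [Ne, ZMod.natCast_eq_zero_iff]; exact haA q hqA
    have hzero : (a : ZMod q) * m + b = 0 := by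
      exact_mod_cast (ZMod.natCast_eq_zero_iff _ _).mpr hdvd
    exact hmr q hqA (by rw [eq_mul_inv_iff_mul_eq₀ ha]; linear_combination hzero)
  · exact hbB q hqB ((Nat.dvd_add_right ((haB q hqB).mul_right m)).mp hdvd)

lemma exists_pow_eq_pow_iff_dvd {G : Type*} [LeftCancelMonoid G] {g : G}
    (hg : ∀ x : G, x ∈ Submonoid.powers g) {q : ℕ} (hq : q ∣ orderOf g) (t : ℕ) :
    (∃ x : G, x ^ q = g ^ t) ↔ q ∣ t := by
  constructor
  · rintro ⟨x, hx⟩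
    obtain ⟨s, rfl⟩ := hg x
    rw [← pow_mul] at hx
    exact ((pow_eq_pow_iff_modEq.mp hx).dvd_iff hq).mp (dvd_mul_left q s)
  · rintro ⟨s, rfl⟩
    exact ⟨g ^ s, by rw [← pow_mul, mul_comm]⟩

theorem stmt8_general (p : ℕ) (hp : p.Prime) (A B : Finset ℕ)
    (hAdvd : ∀ q ∈ A, q.Prime ∧ q ∣ p - 1)
    (hBdvd : ∀ q ∈ B, q.Prime ∧ q ∣ p - 1)
    (y z : (ZMod p)ˣ)
    (hyA : ∀ q ∈ A, ¬ ∃ x : (ZMod p)ˣ, x ^ q = y)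
    (hzB : ∀ q ∈ B, ¬ ∃ x : (ZMod p)ˣ, x ^ q = z)
    (hyB : ∀ q ∈ B, ∃ x : (ZMod p)ˣ, x ^ q = y) :
    ∃ m : ℕ, m + 1 ≤ jacobsthal (∏ q ∈ A, q) ∧
      ∀ q ∈ A ∪ B, ¬ ∃ x : (ZMod p)ˣ, x ^ q = y ^ m * z := by
  have : Fact p.Prime := ⟨hp⟩
  obtain ⟨g, hg⟩ := IsCyclic.exists_generator (α := (ZMod p)ˣ)
  have hg_powers : ∀ x, x ∈ Submonoid.powers g := fun x => mem_powers_iff_mem_zpowers.mpr (hg x)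
  have hord : orderOf g = p - 1 := by
    rw [orderOf_eq_card_of_forall_mem_zpowers hg, Nat.card_eq_fintype_card, ZMod.card_units]
  have residue {q : ℕ} (hq : q ∣ p - 1) := exists_pow_eq_pow_iff_dvd hg_powers (hord ▸ hq)
  obtain ⟨a, rfl⟩ := hg_powers y
  obtain ⟨b, rfl⟩ := hg_powers z
  obtain ⟨m, hm, hmAB⟩ := exists_lt_jacobsthal_forall_not_dvd_mul_add A B
    (fun q hq => (hAdvd q hq).1) a b
    (fun q hq => by rw [← residue (hAdvd q hq).2]; exact hyA q hq)
    (fun q hq => (residue (hBdvd q hq).2 a).mp (hyB q hq))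
    (fun q hq => by rw [← residue (hBdvd q hq).2]; exact hzB q hq)
  refine ⟨m, hm, fun q hq => ?_⟩
  have hq_dvd : q ∣ p - 1 := by
    rcases Finset.mem_union.mp hq with hqA | hqB
    exacts [(hAdvd q hqA).2, (hBdvd q hqB).2]
  rw [← pow_mul, ← pow_add, residue hq_dvd]
  exact hmAB q hq

theorem stmt8 (p : ℕ) (hp : p.Prime) (A B : Finset ℕ)
    (hAB : Disjoint A B) (hA : A.Nonempty) (hB : B.Nonempty)
    (hAdvd : ∀ q ∈ A, q.Prime ∧ q ∣ p - 1)
    (hBdvd : ∀ q ∈ B, q.Prime ∧ q ∣ p - 1)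
    (y z : (ZMod p)ˣ)
    (hyA : ∀ q ∈ A, ¬ ∃ x : (ZMod p)ˣ, x ^ q = y)
    (hzB : ∀ q ∈ B, ¬ ∃ x : (ZMod p)ˣ, x ^ q = z)
    (hyB : ∀ q ∈ B, ∃ x : (ZMod p)ˣ, x ^ q = y) :
    ∃ m : ℕ, m + 1 ≤ jacobsthal (∏ q ∈ A, q) ∧
      ∀ q ∈ A ∪ B, ¬ ∃ x : (ZMod p)ˣ, x ^ q = y ^ m * z :=
  stmt8_general p hp A B hAdvd hBdvd y z hyA hzB hyB
end

section
/- Let p be a prime, let d be a divisor of p−1 with d ≥ 2, and let g = 𝐠_p(d) be the least positive integer whose residue class mod p is not a d-th power residue. Then every positive integer n ≤ p−1 all of whose prime factors are less than g is a d-th power residue mod p, and consequently the number of positive integers n ≤ p−1 all of whose prime factors are less than g is at most (p−1)/d. -/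
/-!
A positive integer below `g = 𝐠_p(d)` is a `d`-th power residue by minimality of `g`, and the
`d`-th power residues form a submonoid of `ZMod p`; so every `n` whose prime factors are all
below `g` is a `d`-th power residue. Such `n ≤ p - 1` are distinct mod `p`, and the `d`-th powers
in the cyclic group `(ZMod p)ˣ` of order `p - 1` form a subgroup of order `(p - 1) / d`.
-/

/-- The least positive integer whose residue class mod `p` is not a `d`-th power
residue, i.e. is not of the form `x ^ d` for a unit `x` of `ZMod p`. -/
noncomputable def leastDPowNonRes (p d : ℕ) : ℕ :=
  sInf {n : ℕ | 0 < n ∧ ¬ ∃ x : (ZMod p)ˣ, ((x : ZMod p)) ^ d = (n : ZMod p)}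

theorem natCast_mem_of_forall_prime_dvd {R : Type*} [Semiring R] (S : Submonoid R) {n : ℕ}
    (hn : n ≠ 0) (h : ∀ q : ℕ, q.Prime → q ∣ n → (q : R) ∈ S) : (n : R) ∈ S := by
  rw [← Nat.prod_primeFactorsList hn, Nat.cast_list_prod]
  refine list_prod_mem fun _ hx => ?_
  obtain ⟨q, hq, rfl⟩ := List.mem_map.mp hx
  exact h q (Nat.prime_of_mem_primeFactorsList hq) (Nat.dvd_of_mem_primeFactorsList hq)

theorem ZMod.ncard_le_ncard_of_natCast_mem {n : ℕ} [NeZero n] {S : Set ℕ} {T : Set (ZMod n)}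
    (hS : S ⊆ Set.Iio n) (hST : ∀ m ∈ S, (m : ZMod n) ∈ T) : S.ncard ≤ T.ncard := by
  refine Set.ncard_le_ncard_of_injOn _ hST (fun a ha b hb hab => ?_) T.toFinite
  rwa [ZMod.natCast_eq_natCast_iff', Nat.mod_eq_of_lt (hS ha), Nat.mod_eq_of_lt (hS hb)] at hab

def unitPowers (M : Type*) [CommMonoid M] (d : ℕ) : Submonoid M where
  carrier := {a | ∃ x : Mˣ, (x : M) ^ d = a}
  mul_mem' := by
    rintro _ _ ⟨x, rfl⟩ ⟨y, rfl⟩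
    exact ⟨x * y, by rw [Units.val_mul, mul_pow]⟩
  one_mem' := ⟨1, by rw [Units.val_one, one_pow]⟩

theorem mem_unitPowers {M : Type*} [CommMonoid M] {d : ℕ} {a : M} :
    a ∈ unitPowers M d ↔ ∃ x : Mˣ, (x : M) ^ d = a :=
  Iff.rfl

theorem coe_unitPowers (M : Type*) [CommMonoid M] (d : ℕ) :
    (unitPowers M d : Set M) = Units.val '' ((powMonoidHom d : Mˣ →* Mˣ).range : Set Mˣ) := by
  ext a
  simp [mem_unitPowers]

theorem ncard_unitPowers (M : Type*) [CommMonoid M] [IsCyclic Mˣ] [Finite Mˣ] (d : ℕ) :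
    (unitPowers M d : Set M).ncard = Nat.card Mˣ / (Nat.card Mˣ).gcd d := by
  rw [coe_unitPowers, Set.ncard_image_of_injective _ Units.val_injective,
    ← Nat.card_coe_set_eq, SetLike.coe_sort_coe, IsCyclic.card_powMonoidHom_range]

theorem ZMod.ncard_unitPowers {p d : ℕ} [Fact p.Prime] (hdvd : d ∣ p - 1) :
    (unitPowers (ZMod p) d : Set (ZMod p)).ncard = (p - 1) / d := by
  rw [_root_.ncard_unitPowers, Nat.card_eq_fintype_card, ZMod.card_units, Nat.gcd_eq_right hdvd]

theorem natCast_mem_unitPowers_of_lt_leastDPowNonRes {p d n : ℕ} (hn : 0 < n)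
    (hlt : n < leastDPowNonRes p d) : (n : ZMod p) ∈ unitPowers (ZMod p) d := by
  by_contra h
  exact (Nat.sInf_le (⟨hn, h⟩ : n ∈ {n : ℕ | 0 < n ∧ _})).not_gt hlt

theorem stmt10_general (p : ℕ) (hp : p.Prime) (d : ℕ) (hdvd : d ∣ p - 1) :
    (∀ n : ℕ, 0 < n → n ≤ p - 1 →
        (∀ q : ℕ, q.Prime → q ∣ n → q < leastDPowNonRes p d) →
        ∃ x : (ZMod p)ˣ, (x : ZMod p) ^ d = (n : ZMod p)) ∧
    ({n : ℕ | 0 < n ∧ n ≤ p - 1 ∧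
        ∀ q : ℕ, q.Prime → q ∣ n → q < leastDPowNonRes p d}.ncard : ℝ) ≤
      ((p : ℝ) - 1) / (d : ℝ) := by
  have : Fact p.Prime := ⟨hp⟩
  have smooth_mem (n : ℕ) (hn : 0 < n)
      (hsmooth : ∀ q : ℕ, q.Prime → q ∣ n → q < leastDPowNonRes p d) :
      (n : ZMod p) ∈ unitPowers (ZMod p) d :=
    natCast_mem_of_forall_prime_dvd _ hn.ne' fun q hq hqn =>
      natCast_mem_unitPowers_of_lt_leastDPowNonRes hq.pos (hsmooth q hq hqn)
  refine ⟨fun n hn _ hsmooth => smooth_mem n hn hsmooth, ?_⟩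
  calc _ ≤ ((unitPowers (ZMod p) d : Set (ZMod p)).ncard : ℝ) :=
        Nat.cast_le.mpr <| ZMod.ncard_le_ncard_of_natCast_mem
          (fun n hn => Nat.lt_of_le_pred hp.pos hn.2.1) fun n hn => smooth_mem n hn.1 hn.2.2
    _ = (((p - 1) / d : ℕ) : ℝ) := by rw [ZMod.ncard_unitPowers hdvd]
    _ ≤ ((p - 1 : ℕ) : ℝ) / d := Nat.cast_div_le
    _ = ((p : ℝ) - 1) / d := by rw [Nat.cast_sub hp.one_le, Nat.cast_one]

theorem stmt10 (p : ℕ) (hp : p.Prime) (d : ℕ) (hdvd : d ∣ p - 1) (hd : 2 ≤ d) :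
    (∀ n : ℕ, 0 < n → n ≤ p - 1 →
        (∀ q : ℕ, q.Prime → q ∣ n → q < leastDPowNonRes p d) →
        ∃ x : (ZMod p)ˣ, (x : ZMod p) ^ d = (n : ZMod p)) ∧
    ({n : ℕ | 0 < n ∧ n ≤ p - 1 ∧
        ∀ q : ℕ, q.Prime → q ∣ n → q < leastDPowNonRes p d}.ncard : ℝ) ≤
      ((p : ℝ) - 1) / (d : ℝ) :=
  stmt10_general p hp d hdvd
end

section
/- Let d be a positive integer such that every odd prime factor of d is greater than 2·(ω(d)+1). Then among any 2·(ω(d)+1) consecutive integers there is at least one coprime to d; equivalently, j(d) ≤ 2·(ω(d)+1). -/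
theorem jacobsthal_le {n m : ℕ} (hm : 0 < m)
    (h : ∀ b : ℤ, ∃ k : ℤ, b < k ∧ k ≤ b + m ∧ IsCoprime k (n : ℤ)) : jacobsthal n ≤ m :=
  Nat.sInf_le ⟨hm, h⟩

theorem Int.exists_mem_primeFactors_dvd_of_not_isCoprime {x : ℤ} {n : ℕ} (hn : n ≠ 0)
    (h : ¬ IsCoprime x n) : ∃ p ∈ n.primeFactors, (p : ℤ) ∣ x := by
  rw [Int.isCoprime_iff_nat_coprime, Int.natAbs_natCast, Nat.Prime.not_coprime_iff_dvd] at h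
  obtain ⟨p, hp, hpx, hpn⟩ := h
  exact ⟨p, Nat.mem_primeFactors.2 ⟨hp, hpn, hn⟩, Int.natCast_dvd.2 hpx⟩

theorem exists_mem_primeFactors_dvd_of_card_lt {ι : Type*} {s : Finset ι} {n : ℕ} (hn : n ≠ 0)
    (x : ι → ℤ) (hs : n.primeFactors.card < s.card) (hx : ∀ i ∈ s, ¬ IsCoprime (x i) n) :
    ∃ p ∈ n.primeFactors, ∃ i ∈ s, ∃ j ∈ s, i ≠ j ∧ (p : ℤ) ∣ x i ∧ (p : ℤ) ∣ x j := by
  choose! f hf hfx using fun i hi => Int.exists_mem_primeFactors_dvd_of_not_isCoprime hn (hx i hi)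
  obtain ⟨i, hi, j, hj, hij, hfij⟩ := Finset.exists_ne_map_eq_of_card_lt_of_maps_to hs hf
  exact ⟨f i, hf i hi, i, hi, j, hj, hij, hfx i hi, hfij ▸ hfx j hj⟩

theorem exists_isCoprime_odd_add_two_mul {n : ℕ} (hn : n ≠ 0)
    (hlarge : ∀ p ∈ n.primeFactors, p ≠ 2 → n.primeFactors.card < p) {a : ℤ} (ha : Odd a) :
    ∃ i ≤ n.primeFactors.card, IsCoprime (a + 2 * i) n := by
  set N := n.primeFactors.card
  by_contra! hcon
  obtain ⟨p, hp, i, hi, j, hj, hij, hpi, hpj⟩ :=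
    exists_mem_primeFactors_dvd_of_card_lt hn (fun i : ℕ => a + 2 * i)
      (s := Finset.range (N + 1)) (by simp [N])
      (fun i hi => hcon i (Nat.lt_succ_iff.1 (Finset.mem_range.1 hi)))
  simp only [Finset.mem_range] at hi hj hpi hpj
  have hp_prime := Nat.prime_of_mem_primeFactors hp
  have hp_ne_two : p ≠ 2 := by
    rintro rfl
    have h2 : (2 : ℤ) ∣ a + 2 * i := by exact_mod_cast hpi
    exact Int.not_even_iff_odd.2 (ha.add_even (even_two_mul _)) (even_iff_two_dvd.2 h2)
  have hp_dvd : (p : ℤ) ∣ 2 * ((j : ℤ) - i) := by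
    have := dvd_sub hpj hpi
    rwa [add_sub_add_left_eq_sub, ← mul_sub] at this
  have hp_dvd_diff : p ∣ ((j : ℤ) - i).natAbs := by
    rcases Int.Prime.dvd_mul hp_prime hp_dvd with h2 | h
    · exact absurd ((Nat.prime_dvd_prime_iff_eq hp_prime Nat.prime_two).1 h2) hp_ne_two
    · exact h
  have hp_le : p ≤ N := (Nat.le_of_dvd (by omega) hp_dvd_diff).trans (by omega)
  exact absurd (hlarge p hp hp_ne_two) (not_lt.2 hp_le)

theorem Int.exists_odd_of_lt_of_le_add_two (b : ℤ) : ∃ a : ℤ, Odd a ∧ b < a ∧ a ≤ b + 2 := by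
  rcases Int.emod_two_eq_zero_or_one b with h | h
  · exact ⟨b + 1, Int.odd_iff.2 (by omega), by omega, by omega⟩
  · exact ⟨b + 2, Int.odd_iff.2 (by omega), by omega, by omega⟩

theorem stmt18 (d : ℕ) (hd : 0 < d)
    (h : ∀ q : ℕ, q.Prime → q ∣ d → q ≠ 2 → 2 * (d.primeFactors.card + 1) < q) :
    (∀ b : ℤ, ∃ k : ℤ, b < k ∧ k ≤ b + 2 * (d.primeFactors.card + 1) ∧
        IsCoprime k (d : ℤ)) ∧
      jacobsthal d ≤ 2 * (d.primeFactors.card + 1) := by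
  have hlarge : ∀ p ∈ d.primeFactors, p ≠ 2 → d.primeFactors.card < p := fun p hp hp2 =>
    (by omega : d.primeFactors.card < 2 * (d.primeFactors.card + 1)).trans
      (h p (Nat.prime_of_mem_primeFactors hp) (Nat.dvd_of_mem_primeFactors hp) hp2)
  have window : ∀ b : ℤ, ∃ k : ℤ, b < k ∧ k ≤ b + 2 * (d.primeFactors.card + 1) ∧
      IsCoprime k (d : ℤ) := by
    intro b
    obtain ⟨a, ha, hba, hab⟩ := Int.exists_odd_of_lt_of_le_add_two b
    obtain ⟨i, hi, hcop⟩ := exists_isCoprime_odd_add_two_mul hd.ne' hlarge ha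
    exact ⟨a + 2 * i, by omega, by omega, hcop⟩
  exact ⟨window, jacobsthal_le (by omega) (by exact_mod_cast window)⟩
end
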